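/- Splitting of steady states: with notation as in the composite open dynamical system, suppose b ∈ ℝ^{S+_Y S'} satisfies u(b) + (j∘i)_*(I) − (j'∘o')_*(O') = 0, where u = j_* ∘ v ∘ j^* + j'_* ∘ v' ∘ j'^*. Set c = j^*(b) and c' = j'^*(b). Then o^*(c) = i'^*(c') and there exists O ∈ ℝ^Y such that v(c) + i_*(I) − o_*(O) = 0 and v'(c') + i'_*(O) − o'_*(O') = 0. -/

import Mathlib

/-- Pushforward of real-valued functions along a map of finite sets (fiberwise sum). -/
def pushR {S S' : Type*} [Fintype S] [DecidableEq S'] (f : S → S') (c : S → ℝ) : S' → ℝ :=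
  fun σ' => ∑ σ : S, if f σ = σ' then c σ else 0

/-!
The composite steady-state equation says that `a := v(c) + i_*(I)` on `S` and
`a' := v'(c') - o'_*(O')` on `S'` satisfy `j_*(a) + j'_*(a') = 0`, so everything reduces to
exactness of the pushout square: such a pair is `(o_*(O), -i'_*(O))` for some `O ∈ ℝ^Y`.
This is proved by duality. Pushforward is the transpose of pullback for the dot product, and the
universal property says that the kernel of `(u, u') ↦ o^*(u) - i'^*(u')` consists of the pairs
`(j^*(w), j'^*(w))`. The functional `⟪a, ·⟫ + ⟪a', ·⟫` vanishes on these, so it factors through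
that map as `⟪O, ·⟫`, and comparing both sides gives the required `O`.
-/

open Matrix

section pushR

variable {S T U : Type*} [Fintype S] [DecidableEq T]

lemma pushR_add (f : S → T) (c d : S → ℝ) : pushR f (c + d) = pushR f c + pushR f d := by
  funext t
  simp only [pushR, Pi.add_apply, ← Finset.sum_add_distrib, ite_add_ite, add_zero]

lemma pushR_sub (f : S → T) (c d : S → ℝ) : pushR f (c - d) = pushR f c - pushR f d := by
  funext t
  simp only [pushR, Pi.sub_apply, ← Finset.sum_sub_distrib, ite_sub_ite, sub_zero]

lemma pushR_dotProduct [Fintype T] (f : S → T) (c : S → ℝ) (w : T → ℝ) :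
    pushR f c ⬝ᵥ w = c ⬝ᵥ (w ∘ f) := by
  simp only [pushR, dotProduct, Finset.sum_mul, ite_mul, zero_mul, Function.comp_apply]
  rw [Finset.sum_comm]
  simp only [Finset.sum_ite_eq, Finset.mem_univ, if_true]

lemma pushR_comp [Fintype T] [Fintype U] [DecidableEq U] (f : S → T) (g : T → U) (c : S → ℝ) :
    pushR (g ∘ f) c = pushR g (pushR f c) := by
  refine dotProduct_eq _ _ fun w => ?_
  simp only [pushR_dotProduct, Function.comp_assoc]

end pushR

lemma exists_pushR_eq_of_pushR_add_pushR_eq_zero {Y S S' P : Type*}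
    [Fintype Y] [Fintype S] [Fintype S'] [Fintype P]
    [DecidableEq S] [DecidableEq S'] [DecidableEq P]
    {o : Y → S} {i' : Y → S'} {j : S → P} {j' : S' → P}
    (hfactor : ∀ (u : S → ℝ) (u' : S' → ℝ), u ∘ o = u' ∘ i' →
      ∃ w : P → ℝ, w ∘ j = u ∧ w ∘ j' = u')
    {a : S → ℝ} {a' : S' → ℝ} (h : pushR j a + pushR j' a' = 0) :
    ∃ O : Y → ℝ, pushR o O = a ∧ pushR i' O = -a' := by
  classical
  let T := (LinearMap.funLeft ℝ ℝ o).coprod (-LinearMap.funLeft ℝ ℝ i')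
  let φ := (dotProductEquiv ℝ S a).coprod (dotProductEquiv ℝ S' a')
  have hφ : φ ∈ (LinearMap.ker T).dualAnnihilator := by
    rw [Submodule.mem_dualAnnihilator]
    rintro ⟨u, u'⟩ hu
    have hagree : u ∘ o = u' ∘ i' := by
      funext y
      simpa [T, add_neg_eq_zero, LinearMap.funLeft_apply] using congrFun hu y
    obtain ⟨w, rfl, rfl⟩ := hfactor u u' hagree
    calc φ (w ∘ j, w ∘ j') = (pushR j a + pushR j' a') ⬝ᵥ w := by
          simp [φ, add_dotProduct, pushR_dotProduct]
      _ = 0 := by rw [h, zero_dotProduct]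
  rw [← LinearMap.range_dualMap_eq_dualAnnihilator_ker] at hφ
  obtain ⟨g, hg⟩ := hφ
  obtain ⟨O, rfl⟩ := (dotProductEquiv ℝ Y).surjective g
  refine ⟨O, dotProduct_eq _ _ fun u => ?_, dotProduct_eq _ _ fun u' => ?_⟩
  · simpa [T, φ, pushR_dotProduct, LinearMap.funLeft] using LinearMap.congr_fun hg (u, 0)
  · simpa [T, φ, pushR_dotProduct, LinearMap.funLeft, neg_eq_iff_eq_neg] using
      LinearMap.congr_fun hg (0, u')

/-- Splitting of steady states: if `b ∈ ℝ^{S+_Y S'}` is a steady state of the composite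
open dynamical system with inflows `I` and outflows `O'`, then `c = j^*(b)` and
`c' = j'^*(b)` agree on `Y` and there exists `O ∈ ℝ^Y` making `c` a steady state of the
first system with inflows `I`, outflows `O`, and `c'` a steady state of the second with
inflows `O`, outflows `O'`. -/
theorem split_steady_states {X Y Z S S' P : Type*}
    [Fintype X] [Fintype Y] [Fintype Z] [Fintype S] [Fintype S'] [Fintype P]
    [DecidableEq S] [DecidableEq S'] [DecidableEq P]
    (i : X → S) (o : Y → S) (i' : Y → S') (o' : Z → S')
    (j : S → P) (j' : S' → P)
    (hcomm : j ∘ o = j' ∘ i')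
    (huniv : ∀ {W : Type} (u : S → W) (u' : S' → W), u ∘ o = u' ∘ i' →
      ∃! w : P → W, w ∘ j = u ∧ w ∘ j' = u')
    (v : (S → ℝ) → (S → ℝ)) (v' : (S' → ℝ) → (S' → ℝ))
    (b : P → ℝ) (I : X → ℝ) (O' : Z → ℝ)
    (hb : (pushR j (v (b ∘ j)) + pushR j' (v' (b ∘ j')))
        + pushR (j ∘ i) I - pushR (j' ∘ o') O' = 0) :
    (b ∘ j) ∘ o = (b ∘ j') ∘ i' ∧
    ∃ O : Y → ℝ,
      v (b ∘ j) + pushR i I - pushR o O = 0 ∧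
      v' (b ∘ j') + pushR i' O - pushR o' O' = 0 := by
  refine ⟨by rw [Function.comp_assoc, Function.comp_assoc, hcomm], ?_⟩
  have hsplit : pushR j (v (b ∘ j) + pushR i I) + pushR j' (v' (b ∘ j') - pushR o' O') = 0 := by
    rw [pushR_add, pushR_sub, ← pushR_comp, ← pushR_comp, ← hb]
    abel
  obtain ⟨O, hO, hO'⟩ := exists_pushR_eq_of_pushR_add_pushR_eq_zero
    (fun u u' hagree => (huniv u u' hagree).exists) hsplit
  exact ⟨O, by rw [hO, sub_self], by rw [hO']; abel⟩
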